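/- For Hermitian matrices H, H' ∈ B(C^d), the ratio of partition functions satisfies Tr[exp(−H')] / Tr[exp(−H)] ≤ exp(‖H − H'‖), where ‖·‖ is the operator norm. -/

import Mathlib

open scoped Kronecker Matrix.Norms.L2Operator ComplexOrder
open Matrix NormedSpace

noncomputable section

/-- A matrix on `C^{d_A} ⊗ C^{d_C}` is separable if it is a finite sum of Kronecker
products of positive semidefinite matrices. -/
def MatSeparable {dA dC : ℕ} (X : Matrix (Fin dA × Fin dC) (Fin dA × Fin dC) ℂ) : Prop :=
  ∃ (n : ℕ) (XA : Fin n → Matrix (Fin dA) (Fin dA) ℂ)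
    (XC : Fin n → Matrix (Fin dC) (Fin dC) ℂ),
    (∀ i, (XA i).PosSemidef) ∧ (∀ i, (XC i).PosSemidef) ∧
    X = ∑ i, XA i ⊗ₖ XC i
section PartitionAux

variable {d : ℕ}

def traceCLM (d : ℕ) : Matrix (Fin d) (Fin d) ℂ →L[ℂ] ℂ :=
  LinearMap.toContinuousLinearMap (Matrix.traceLinearMap (Fin d) ℂ ℂ)

@[simp] lemma traceCLM_apply (X : Matrix (Fin d) (Fin d) ℂ) : traceCLM d X = X.trace := rfl

def traceMulCLM (K : Matrix (Fin d) (Fin d) ℂ) : Matrix (Fin d) (Fin d) ℂ →L[ℂ] ℂ :=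
  LinearMap.toContinuousLinearMap
    ((Matrix.traceLinearMap (Fin d) ℂ ℂ).comp (LinearMap.mulRight ℂ K))

@[simp] lemma traceMulCLM_apply (K X : Matrix (Fin d) (Fin d) ℂ) :
    traceMulCLM K X = (X * K).trace := rfl

lemma euclid_apply_le (w : EuclideanSpace ℂ (Fin d)) (i : Fin d) : ‖w i‖ ≤ ‖w‖ := by
  have h := norm_inner_le_norm (𝕜 := ℂ) (EuclideanSpace.single i (1:ℂ)) w
  simpa [EuclideanSpace.inner_single_left] using h

lemma entry_norm_le (X : Matrix (Fin d) (Fin d) ℂ) (i j : Fin d) : ‖X i j‖ ≤ ‖X‖ := by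
  have hv : ‖(EuclideanSpace.single j (1:ℂ) : EuclideanSpace ℂ (Fin d))‖ = 1 := by
    simp [EuclideanSpace.norm_single]
  have h := X.l2_opNorm_mulVec (EuclideanSpace.single j (1:ℂ))
  rw [hv, mul_one] at h
  refine le_trans (le_trans ?_ (euclid_apply_le _ i)) h
  have : ((EuclideanSpace.equiv (Fin d) ℂ).symm <|
      X *ᵥ (EuclideanSpace.single j (1:ℂ))) i = X i j := by
    show (X *ᵥ (EuclideanSpace.single j (1:ℂ) : EuclideanSpace ℂ (Fin d))) i = X i j
    show (X *ᵥ (Pi.single j (1:ℂ))) i = X i j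
    simp [Matrix.mulVec_single]
  rw [this]

lemma trace_norm_le (X : Matrix (Fin d) (Fin d) ℂ) : ‖X.trace‖ ≤ d * ‖X‖ := by
  calc ‖X.trace‖ ≤ ∑ i : Fin d, ‖X i i‖ := norm_sum_le _ _
    _ ≤ ∑ _i : Fin d, ‖X‖ := Finset.sum_le_sum fun i _ => entry_norm_le X i i
    _ = d * ‖X‖ := by simp [Finset.sum_const]

lemma key_ineq (B K : Matrix (Fin d) (Fin d) ℂ) :
    ((Bᴴ * K * B).trace).re ≤ ‖K‖ * ((Bᴴ * B).trace).re := by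
  classical
  set c : Fin d → EuclideanSpace ℂ (Fin d) :=
    fun i => (EuclideanSpace.equiv (Fin d) ℂ).symm (fun j => B j i) with hc
  have hdiag1 : ∀ i, (Bᴴ * K * B) i i =
      inner ℂ (c i) ((EuclideanSpace.equiv (Fin d) ℂ).symm (K *ᵥ (fun j => B j i))) := by
    intro i
    rw [mul_assoc]
    simp only [PiLp.inner_apply, RCLike.inner_apply, Matrix.mul_apply,
      Matrix.conjTranspose_apply]
    exact Finset.sum_congr rfl fun j _ => mul_comm _ _
  have hdiag2 : ∀ i, (Bᴴ * B) i i = inner ℂ (c i) (c i) := by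
    intro i
    simp only [PiLp.inner_apply, RCLike.inner_apply, Matrix.mul_apply,
      Matrix.conjTranspose_apply]
    exact Finset.sum_congr rfl fun j _ => mul_comm _ _
  rw [Matrix.trace, Matrix.trace, Complex.re_sum, Complex.re_sum, Finset.mul_sum]
  refine Finset.sum_le_sum fun i _ => ?_
  rw [Matrix.diag_apply, Matrix.diag_apply, hdiag1 i, hdiag2 i]
  have h1 : (inner (𝕜 := ℂ) (c i) (c i)).re = ‖c i‖ ^ 2 := by
    simpa using inner_self_eq_norm_sq (𝕜 := ℂ) (c i)
  rw [h1]
  calc (inner (𝕜 := ℂ) (c i) ((EuclideanSpace.equiv (Fin d) ℂ).symm (K *ᵥ (fun j => B j i)))).re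
      ≤ ‖(inner (𝕜 := ℂ) (c i) ((EuclideanSpace.equiv (Fin d) ℂ).symm (K *ᵥ (fun j => B j i))))‖ :=
        Complex.re_le_norm _
    _ ≤ ‖c i‖ * ‖(EuclideanSpace.equiv (Fin d) ℂ).symm (K *ᵥ (fun j => B j i))‖ :=
        norm_inner_le_norm _ _
    _ ≤ ‖c i‖ * (‖K‖ * ‖c i‖) := by
        refine mul_le_mul_of_nonneg_left ?_ (norm_nonneg _)
        exact K.l2_opNorm_mulVec (c i)
    _ = ‖K‖ * ‖c i‖ ^ 2 := by ring

lemma exp_herm_factor {X : Matrix (Fin d) (Fin d) ℂ} (hX : X.IsHermitian) :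
    ∃ B : Matrix (Fin d) (Fin d) ℂ, IsUnit B ∧ exp X = Bᴴ * B := by
  refine ⟨exp ((2⁻¹ : ℂ) • X), Matrix.isUnit_exp _, ?_⟩
  have hherm : ((2⁻¹ : ℂ) • X)ᴴ = (2⁻¹ : ℂ) • X := by
    rw [Matrix.conjTranspose_smul, hX.eq]
    norm_num
  rw [← Matrix.exp_conjTranspose, hherm, ← Matrix.exp_add_of_commute _ _ (Commute.refl _),
    ← add_smul]
  norm_num

lemma trace_conjTranspose_mul_self_re (B : Matrix (Fin d) (Fin d) ℂ) :
    ((Bᴴ * B).trace).re = ∑ i, ∑ j, Complex.normSq (B j i) := by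
  simp only [Matrix.trace, Matrix.diag_apply, Matrix.mul_apply, Matrix.conjTranspose_apply,
    Complex.re_sum]
  refine Finset.sum_congr rfl fun i _ => Finset.sum_congr rfl fun j _ => ?_
  rw [mul_comm]
  rw [show star (B j i) = (starRingEnd ℂ) (B j i) from rfl, Complex.mul_conj, Complex.ofReal_re]

lemma trace_pos_of_unit (hd : 0 < d) {B : Matrix (Fin d) (Fin d) ℂ} (hB : IsUnit B) :
    0 < ((Bᴴ * B).trace).re := by
  have : Nonempty (Fin d) := ⟨⟨0, hd⟩⟩
  have hBne : B ≠ 0 := by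
    rintro rfl
    obtain ⟨u, hu⟩ := hB
    have h1 : (1 : Matrix (Fin d) (Fin d) ℂ) = 0 := by
      calc (1 : Matrix (Fin d) (Fin d) ℂ) = ↑u⁻¹ * ↑u := (Units.inv_mul u).symm
        _ = ↑u⁻¹ * 0 := by rw [hu]
        _ = 0 := mul_zero _
    exact one_ne_zero h1
  rw [trace_conjTranspose_mul_self_re]
  obtain ⟨j, i, hij⟩ : ∃ j i, B j i ≠ 0 := by
    by_contra h
    push_neg at h
    exact hBne (by ext j i; simpa using h j i)
  refine Finset.sum_pos' (fun i _ => Finset.sum_nonneg fun j _ => Complex.normSq_nonneg _) ?_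
  exact ⟨i, Finset.mem_univ _, Finset.sum_pos' (fun j _ => Complex.normSq_nonneg _)
    ⟨j, Finset.mem_univ _, by simpa [Complex.normSq_pos] using hij⟩⟩

lemma hasDerivAt_affine (M K : Matrix (Fin d) (Fin d) ℂ) (t : ℝ) :
    HasDerivAt (fun s : ℝ => M + (s:ℂ) • K) K t := by
  have h0 : HasDerivAt (fun s : ℝ => s • K) ((1:ℝ) • K) t :=
    (hasDerivAt_id t).smul_const K
  have h1 : HasDerivAt (fun s : ℝ => M + s • K) ((1:ℝ) • K) t := h0.const_add M
  have he : (fun s : ℝ => M + s • K) = (fun s : ℝ => M + (s:ℂ) • K) := by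
    funext s
    rw [Complex.coe_smul]
  rw [he, one_smul] at h1
  exact h1

lemma hasDerivAt_pow_affine (M K : Matrix (Fin d) (Fin d) ℂ) (n : ℕ) (t : ℝ) :
    HasDerivAt (fun s : ℝ => (M + (s:ℂ) • K) ^ n)
      (∑ j ∈ Finset.range n,
        (M + (t:ℂ) • K) ^ j * K * (M + (t:ℂ) • K) ^ (n - 1 - j)) t := by
  induction n with
  | zero => simpa using hasDerivAt_const t (1 : Matrix (Fin d) (Fin d) ℂ)
  | succ n ih =>
      have h : HasDerivAt (fun s : ℝ => (M + (s:ℂ) • K) ^ n * (M + (s:ℂ) • K)) _ t :=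
        ih.mul (hasDerivAt_affine M K t)
      have he : (fun s : ℝ => (M + (s:ℂ) • K) ^ n * (M + (s:ℂ) • K))
          = fun s : ℝ => (M + (s:ℂ) • K) ^ (n+1) := by
        funext s; rw [← pow_succ]
      rw [he] at h
      convert h using 1
      set A := M + (t:ℂ) • K
      rw [Finset.sum_range_succ, Finset.sum_mul]
      have hterm : ∀ j ∈ Finset.range n,
          A ^ j * K * A ^ (n - j) = A ^ j * K * A ^ (n - 1 - j) * A := by
        intro j hj
        rw [Finset.mem_range] at hj
        rw [mul_assoc (A ^ j * K), ← pow_succ]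
        congr 2
        omega
      simp only [Nat.add_sub_cancel, Nat.sub_self, pow_zero, mul_one]
      congr 1
      exact Finset.sum_congr rfl hterm

lemma trace_deriv_sum (A K : Matrix (Fin d) (Fin d) ℂ) (n : ℕ) :
    (∑ j ∈ Finset.range n, A ^ j * K * A ^ (n - 1 - j)).trace
      = (n : ℂ) * (A ^ (n - 1) * K).trace := by
  rw [Matrix.trace_sum]
  have h : ∀ j ∈ Finset.range n,
      (A ^ j * K * A ^ (n - 1 - j)).trace = (A ^ (n - 1) * K).trace := by
    intro j hj
    rw [Finset.mem_range] at hj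
    rw [Matrix.trace_mul_comm, ← mul_assoc, ← pow_add]
    congr 3
    omega
  rw [Finset.sum_congr rfl h, Finset.sum_const, Finset.card_range, nsmul_eq_mul]

set_option maxHeartbeats 1000000 in
lemma hasDerivAt_trace_exp (M K : Matrix (Fin d) (Fin d) ℂ) (t : ℝ) :
    HasDerivAt (fun s : ℝ => (exp (M + (s:ℂ) • K)).trace)
      ((exp (M + (t:ℂ) • K) * K).trace) t := by
  classical
  set A : ℝ → Matrix (Fin d) (Fin d) ℂ := fun s => M + (s:ℂ) • K with hA
  set R : ℝ := |t| + 1 with hR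
  set C : ℝ := ‖M‖ + R * ‖K‖ with hC
  have hR0 : 0 < R := by positivity
  have hC0 : 0 ≤ C := by
    have : (0:ℝ) ≤ R * ‖K‖ := mul_nonneg hR0.le (norm_nonneg _)
    positivity
  have hAle : ∀ y ∈ Metric.ball (0:ℝ) R, ‖A y‖ ≤ C := by
    intro y hy
    rw [Metric.mem_ball, Real.dist_eq, sub_zero] at hy
    calc ‖A y‖ ≤ ‖M‖ + ‖(y:ℂ) • K‖ := norm_add_le _ _
      _ = ‖M‖ + |y| * ‖K‖ := by rw [norm_smul]; simp
      _ ≤ ‖M‖ + R * ‖K‖ :=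
          add_le_add (le_refl ‖M‖) (mul_le_mul_of_nonneg_right hy.le (norm_nonneg K))
  set g : ℕ → ℝ → ℂ := fun n s => ((n.factorial : ℂ))⁻¹ • ((A s) ^ n).trace with hg
  set g' : ℕ → ℝ → ℂ :=
    fun n s => (n : ℂ) • ((n.factorial : ℂ))⁻¹ • ((A s) ^ (n - 1) * K).trace with hg'
  set u : ℕ → ℝ :=
    fun n => (n : ℝ) * (((n.factorial : ℝ))⁻¹ * (d * (C ^ (n - 1) * ‖K‖))) with hu
  have hu_summable : Summable u := by
    rw [← summable_nat_add_iff 1]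
    have heq : ∀ n : ℕ, u (n + 1) = (d * ‖K‖) * (C ^ n / (n.factorial : ℝ)) := by
      intro n
      rw [hu]
      simp only [Nat.add_sub_cancel, Nat.factorial_succ, Nat.cast_mul, Nat.cast_add,
        Nat.cast_one]
      have h1 : ((n:ℝ) + 1) ≠ 0 := by positivity
      have h2 : ((n.factorial : ℝ)) ≠ 0 := Nat.cast_ne_zero.2 n.factorial_ne_zero
      field_simp
    rw [funext heq]
    exact (Real.summable_pow_div_factorial C).mul_left _
  have hderiv : ∀ n, ∀ y ∈ Metric.ball (0:ℝ) R, HasDerivAt (g n) (g' n y) y := by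
    intro n y _
    have hpow := hasDerivAt_pow_affine M K n y
    have htr := (((traceCLM d).restrictScalars ℝ).hasFDerivAt).comp_hasDerivAt y hpow
    have htr' : HasDerivAt (fun s => ((A s) ^ n).trace)
        ((∑ j ∈ Finset.range n, (A y) ^ j * K * (A y) ^ (n - 1 - j)).trace) y := htr
    rw [trace_deriv_sum] at htr'
    have h2 := htr'.const_smul (((n.factorial : ℂ))⁻¹)
    have h3 : ((n.factorial : ℂ))⁻¹ • ((n : ℂ) * ((A y) ^ (n - 1) * K).trace) = g' n y := by
      rw [hg']
      simp only [smul_eq_mul]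
      ring
    rw [h3] at h2
    exact h2
  have hbound : ∀ n, ∀ y ∈ Metric.ball (0:ℝ) R, ‖g' n y‖ ≤ u n := by
    intro n y hy
    have hRHS : ‖g' n y‖ = (n:ℝ) * (((n.factorial : ℝ))⁻¹ * ‖((A y) ^ (n - 1) * K).trace‖) := by
      rw [hg']
      rw [norm_smul, norm_smul, norm_inv]
      simp
    rw [hRHS, hu]
    refine mul_le_mul_of_nonneg_left ?_ (Nat.cast_nonneg n)
    refine mul_le_mul_of_nonneg_left ?_ (by positivity)
    calc ‖((A y) ^ (n - 1) * K).trace‖ ≤ d * ‖(A y) ^ (n - 1) * K‖ := trace_norm_le _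
      _ ≤ d * (C ^ (n - 1) * ‖K‖) := by
          refine mul_le_mul_of_nonneg_left ?_ (Nat.cast_nonneg d)
          calc ‖(A y) ^ (n - 1) * K‖ ≤ ‖(A y) ^ (n - 1)‖ * ‖K‖ := norm_mul_le _ _
            _ ≤ C ^ (n - 1) * ‖K‖ := by
                refine mul_le_mul_of_nonneg_right ?_ (norm_nonneg _)
                rcases Nat.eq_zero_or_pos (n - 1) with h | h
                · rcases Nat.eq_zero_or_pos d with hd | hd
                  · subst hd
                    rw [h, pow_zero, pow_zero]
                    have h1 : (1 : Matrix (Fin 0) (Fin 0) ℂ) = 0 := Subsingleton.elim _ _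
                    rw [h1, norm_zero]
                    norm_num
                  · have : Nonempty (Fin d) := ⟨⟨0, hd⟩⟩
                    rw [h, pow_zero, pow_zero]
                    have h1 : ‖(1 : Matrix (Fin d) (Fin d) ℂ)‖ = 1 := by
                      rw [Matrix.cstar_norm_def, _root_.map_one]
                      exact norm_one
                    rw [h1]
                · calc ‖(A y) ^ (n-1)‖ ≤ ‖A y‖ ^ (n-1) := norm_pow_le' _ h
                    _ ≤ C ^ (n-1) := pow_le_pow_left₀ (norm_nonneg _) (hAle y hy) _
  have hsum_t : Summable fun n => g n t := by
    have hs := NormedSpace.expSeries_summable' (𝕂 := ℂ) (A t)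
    have h2 := hs.map ((traceCLM d) : Matrix (Fin d) (Fin d) ℂ →ₗ[ℂ] ℂ).toAddMonoidHom
      (traceCLM d).continuous
    refine (summable_congr fun n => ?_).mp h2
    show (traceCLM d) (((n.factorial : ℂ))⁻¹ • (A t) ^ n) = g n t
    simp [hg, Matrix.trace_smul]
  have htball : t ∈ Metric.ball (0:ℝ) R := by
    rw [Metric.mem_ball, Real.dist_eq, sub_zero, hR]
    linarith [abs_nonneg t, le_abs_self t, neg_abs_le t]
  have hmain := hasDerivAt_tsum_of_isPreconnected hu_summable Metric.isOpen_ball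
    (convex_ball (0:ℝ) R).isPreconnected hderiv hbound htball hsum_t htball
  have hfun : (fun y => ∑' n, g n y) = fun s : ℝ => (exp (A s)).trace := by
    funext y
    have hs := NormedSpace.expSeries_summable' (𝕂 := ℂ) (A y)
    calc ∑' n, g n y = ∑' n, (traceCLM d) (((n.factorial : ℂ))⁻¹ • (A y) ^ n) := by
          refine tsum_congr fun n => ?_
          simp [hg, Matrix.trace_smul]
      _ = (traceCLM d) (∑' n, ((n.factorial : ℂ))⁻¹ • (A y) ^ n) :=
          ((traceCLM d).map_tsum hs).symm
      _ = (exp (A y)).trace := by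
          rw [NormedSpace.exp_eq_tsum (𝕂 := ℂ)]
          rfl
  have hg'sum : Summable fun n => g' n t :=
    Summable.of_norm_bounded hu_summable fun n => hbound n t htball
  have hderiv_eq : ∑' n, g' n t = (exp (A t) * K).trace := by
    rw [hg'sum.tsum_eq_zero_add]
    have h0 : g' 0 t = 0 := by simp [hg']
    have hsucc : ∀ n : ℕ, g' (n + 1) t
        = (traceMulCLM K) (((n.factorial : ℂ))⁻¹ • (A t) ^ n) := by
      intro n
      rw [hg']
      simp only [Nat.add_sub_cancel, traceMulCLM_apply, Matrix.smul_mul, Matrix.trace_smul]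
      rw [smul_smul]
      congr 1
      rw [Nat.factorial_succ, Nat.cast_mul]
      have h1 : ((n:ℂ) + 1) ≠ 0 := Nat.cast_add_one_ne_zero n
      have h2 : ((n.factorial : ℂ)) ≠ 0 := Nat.cast_ne_zero.2 n.factorial_ne_zero
      push_cast
      field_simp
    rw [h0, zero_add, funext hsucc, ← (traceMulCLM K).map_tsum
      (NormedSpace.expSeries_summable' (𝕂 := ℂ) (A t)), NormedSpace.exp_eq_tsum (𝕂 := ℂ)]
    rfl
  rw [hfun, hderiv_eq] at hmain
  exact hmain

end PartitionAux

/-- Ratio of partition functions: $\mathrm{Tr}[e^{-H'}]/\mathrm{Tr}[e^{-H}] ≤ e^{‖H-H'‖}$. -/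
theorem partition_function_ratio {d : ℕ}
    (Hm H' : Matrix (Fin d) (Fin d) ℂ) (hH : Hm.IsHermitian) (hH' : H'.IsHermitian) :
    (Matrix.trace (exp (-H'))).re / (Matrix.trace (exp (-Hm))).re
      ≤ Real.exp ‖Hm - H'‖ := by
  rcases Nat.eq_zero_or_pos d with hd | hd
  · subst hd
    simp only [Matrix.trace, Finset.univ_eq_empty, Finset.sum_empty, Complex.zero_re, zero_div]
    exact (Real.exp_pos _).le
  · set M : Matrix (Fin d) (Fin d) ℂ := -Hm with hM
    set K : Matrix (Fin d) (Fin d) ℂ := Hm - H' with hK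
    have hMh : M.IsHermitian := hH.neg
    have hKh : K.IsHermitian := hH.sub hH'
    have hAh : ∀ t : ℝ, (M + (t:ℂ) • K).IsHermitian := by
      intro t
      have h3 : ((t:ℂ) • K).IsHermitian := by
        unfold Matrix.IsHermitian
        rw [Matrix.conjTranspose_smul, hKh.eq]
        congr 1
        simp [Complex.conj_ofReal]
      exact hMh.add h3
    set F : ℝ → ℝ := fun t => ((exp (M + (t:ℂ) • K)).trace).re with hF
    set c : ℝ := ‖K‖ with hc
    have hc0 : 0 ≤ c := norm_nonneg _
    have hF' : ∀ t : ℝ,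
        HasDerivAt F (((exp (M + (t:ℂ) • K) * K).trace).re) t := by
      intro t
      exact (Complex.reCLM.hasFDerivAt).comp_hasDerivAt t (hasDerivAt_trace_exp M K t)
    have hineq : ∀ t : ℝ, ((exp (M + (t:ℂ) • K) * K).trace).re ≤ c * F t := by
      intro t
      obtain ⟨B, hB, hfac⟩ := exp_herm_factor (hAh t)
      rw [hF]
      simp only
      rw [hfac]
      have h1 : (Bᴴ * B * K).trace = (B * K * Bᴴ).trace := by
        rw [Matrix.trace_mul_cycle, Matrix.trace_mul_cycle]
      have h2 : (Bᴴ * B).trace = (B * Bᴴ).trace := Matrix.trace_mul_comm _ _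
      rw [h1, h2]
      have := key_ineq (B := Bᴴ) (K := K)
      rwa [Matrix.conjTranspose_conjTranspose] at this
    have hFpos : ∀ t : ℝ, 0 < F t := by
      intro t
      obtain ⟨B, hB, hfac⟩ := exp_herm_factor (hAh t)
      rw [hF]
      simp only
      rw [hfac]
      exact trace_pos_of_unit hd hB
    set φ : ℝ → ℝ := fun t => F t * Real.exp (-(c * t)) with hφ
    have hφ' : ∀ t : ℝ, HasDerivAt φ
        (((exp (M + (t:ℂ) • K) * K).trace).re * Real.exp (-(c * t))
          + F t * (Real.exp (-(c * t)) * (-c))) t := by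
      intro t
      have hlin : HasDerivAt (fun s : ℝ => -(c * s)) (-c) t := by
        simpa [Pi.neg_def] using ((hasDerivAt_id t).const_mul c).neg
      exact (hF' t).mul hlin.exp
    have hφ'nonpos : ∀ t : ℝ,
        ((exp (M + (t:ℂ) • K) * K).trace).re * Real.exp (-(c * t))
          + F t * (Real.exp (-(c * t)) * (-c)) ≤ 0 := by
      intro t
      have h1 := hineq t
      have h2 : (0:ℝ) < Real.exp (-(c * t)) := Real.exp_pos _
      nlinarith [h2.le]
    have hanti : AntitoneOn φ (Set.Icc (0:ℝ) 1) := by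
      refine antitoneOn_of_deriv_nonpos (convex_Icc 0 1)
        (fun x _ => (hφ' x).continuousAt.continuousWithinAt)
        (fun x _ => (hφ' x).differentiableAt.differentiableWithinAt) ?_
      intro x _
      rw [(hφ' x).deriv]
      exact hφ'nonpos x
    have h01 : φ 1 ≤ φ 0 :=
      hanti (Set.mem_Icc.2 ⟨le_refl 0, zero_le_one⟩) (Set.mem_Icc.2 ⟨zero_le_one, le_refl 1⟩)
        zero_le_one
    have hA0 : M + ((0:ℝ):ℂ) • K = -Hm := by simp [hM]
    have hA1 : M + ((1:ℝ):ℂ) • K = -H' := by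
      simp only [Complex.ofReal_one, one_smul, hM, hK]
      abel
    have hφ0 : φ 0 = ((exp (-Hm)).trace).re := by
      rw [hφ]
      simp only [mul_zero, neg_zero, Real.exp_zero, mul_one, hF]
      rw [hA0]
    have hφ1 : φ 1 = ((exp (-H')).trace).re * Real.exp (-c) := by
      rw [hφ]
      simp only [mul_one, hF]
      rw [hA1]
    rw [hφ0, hφ1] at h01
    have hden : 0 < ((exp (-Hm)).trace).re := by
      have := hFpos 0
      rw [hF] at this
      simp only at this
      rwa [hA0] at this
    rw [div_le_iff₀ hden]
    calc ((exp (-H')).trace).re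
        = ((exp (-H')).trace).re * Real.exp (-c) * Real.exp c := by
          rw [mul_assoc, ← Real.exp_add]
          simp
      _ ≤ ((exp (-Hm)).trace).re * Real.exp c :=
          mul_le_mul_of_nonneg_right h01 (Real.exp_pos _).le
      _ = Real.exp c * ((exp (-Hm)).trace).re := mul_comm _ _
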